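/- arXiv:2110.05225 — 6 statements merged into one kernel-verified Lean document; each statement's English description precedes it below -/
import Mathlib

section
/- Suppose Y(t) ⊥ T | V (exchangeability given V) and Y(t) ⊥ V | P_t(V), where P_t is a measurable function of V. Then Y(t) ⊥ (V, T) | P_t(V). -/
/-!
Let `m₀ = σ(P_t(V)) ≤ m₁ = σ(V)`. The hypothesis `Y(t) ⊥ V | P_t(V)` says that conditioning the
events of `Y(t)` on `m₁` gives the same as conditioning them on `m₀`. Hence on an event
`{Y(t) ∈ A} ∩ S ∩ {T ∈ C}` with `S ∈ m₁`, conditioning first on `m₁` and using `Y(t) ⊥ T | V`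
gives `P(Y(t) ∈ A | m₀) · P(S ∩ {T ∈ C} | m₁)`, and conditioning this on `m₀` pulls the first
factor out. The sets `S ∩ {T ∈ C}` form a π-system generating `m₁ ⊔ σ(T) = σ(V, T)`. This is the
contraction property of conditional independence.
-/

open ProbabilityTheory MeasureTheory Set

lemma IsPiSystem.image2_inter {Ω : Type*} {S T : Set (Set Ω)} (hS : IsPiSystem S)
    (hT : IsPiSystem T) : IsPiSystem (image2 (· ∩ ·) S T) := by
  rintro _ ⟨s₁, hs₁, t₁, ht₁, rfl⟩ _ ⟨s₂, hs₂, t₂, ht₂, rfl⟩ hne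
  have hst : s₁ ∩ t₁ ∩ (s₂ ∩ t₂) = s₁ ∩ s₂ ∩ (t₁ ∩ t₂) := inter_inter_inter_comm _ _ _ _
  rw [hst] at hne ⊢
  exact ⟨_, hS _ hs₁ _ hs₂ (hne.mono inter_subset_left),
    _, hT _ ht₁ _ ht₂ (hne.mono inter_subset_right), rfl⟩

lemma MeasurableSpace.generateFrom_image2_inter_measurableSet {Ω : Type*}
    (m₁ m₂ : MeasurableSpace Ω) :
    generateFrom (image2 (· ∩ ·) {s | MeasurableSet[m₁] s} {t | MeasurableSet[m₂] t})
      = m₁ ⊔ m₂ := by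
  apply le_antisymm
  · refine generateFrom_le ?_
    rintro _ ⟨s, hs, t, ht, rfl⟩
    exact (le_sup_left (a := m₁) (b := m₂) s hs).inter (le_sup_right (a := m₁) (b := m₂) t ht)
  · refine sup_le (fun s hs => ?_) (fun t ht => ?_)
    · exact measurableSet_generateFrom ⟨s, hs, univ, MeasurableSet.univ, inter_univ s⟩
    · exact measurableSet_generateFrom ⟨univ, MeasurableSet.univ, t, ht, univ_inter t⟩

namespace ProbabilityTheory

variable {Ω : Type*} {m mΩ : MeasurableSpace Ω} {μ : Measure Ω} [IsFiniteMeasure μ]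

lemma condExp_inter_ae_eq_indicator {s t : Set Ω} (hs : MeasurableSet[m] s)
    (ht : MeasurableSet t) : μ⟦s ∩ t | m⟧ =ᵐ[μ] s.indicator (μ⟦t | m⟧) := by
  rw [← indicator_indicator]
  exact condExp_indicator ((integrable_const 1).indicator ht) hs

lemma condExp_condExp_indicator_mul (hm : m ≤ mΩ) (s : Set Ω) {f : Ω → ℝ}
    (hf : Integrable f μ) :
    μ[μ⟦s | m⟧ * f | m] =ᵐ[μ] μ⟦s | m⟧ * μ[f | m] := by
  have hbound : ∀ᵐ ω ∂μ, ‖(μ⟦s | m⟧) ω‖ ≤ 1 :=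
    ae_bdd_abs_condExp_of_ae_bdd_abs (ae_of_all _ fun ω => by
      by_cases hω : ω ∈ s <;> simp [hω])
  exact condExp_stronglyMeasurable_mul_of_bound hm stronglyMeasurable_condExp hf 1 hbound

variable [StandardBorelSpace Ω] {m₀ m₁ mY mT : MeasurableSpace Ω}

theorem CondIndep.condExp_indicator_ae_eq_of_le (h₀₁ : m₀ ≤ m₁) (hm₁ : m₁ ≤ mΩ) (hY : mY ≤ mΩ)
    (h : CondIndep m₀ mY m₁ (h₀₁.trans hm₁) μ) {A : Set Ω} (hA : MeasurableSet[mY] A) :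
    μ⟦A | m₁⟧ =ᵐ[μ] μ⟦A | m₀⟧ := by
  have hm₀ : m₀ ≤ mΩ := h₀₁.trans hm₁
  have h_mul := (condIndep_iff m₀ mY m₁ hm₀ hY hm₁ μ).mp h
  refine (ae_eq_condExp_of_forall_setIntegral_eq hm₁ ((integrable_const 1).indicator (hY A hA))
    (fun _ _ _ => integrable_condExp.integrableOn) (fun s hs _ => ?_)
    (stronglyMeasurable_condExp.mono h₀₁).aestronglyMeasurable).symm
  have hs_int : Integrable (s.indicator fun _ => (1 : ℝ)) μ :=
    (integrable_const 1).indicator (hm₁ s hs)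
  calc ∫ ω in s, (μ⟦A | m₀⟧) ω ∂μ
      = ∫ ω, (μ⟦A | m₀⟧ * s.indicator fun _ => (1 : ℝ)) ω ∂μ := by
        rw [← integral_indicator (hm₁ s hs)]
        congr 1 with ω
        by_cases hω : ω ∈ s <;> simp [hω]
    _ = ∫ ω, μ[μ⟦A | m₀⟧ * s.indicator fun _ => (1 : ℝ) | m₀] ω ∂μ :=
        (integral_condExp hm₀).symm
    _ = ∫ ω, (μ⟦A ∩ s | m₀⟧) ω ∂μ := integral_congr_ae
        ((condExp_condExp_indicator_mul hm₀ A hs_int).trans (h_mul A s hA hs).symm)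
    _ = ∫ ω in s, A.indicator (fun _ => (1 : ℝ)) ω ∂μ := by
        rw [integral_condExp hm₀, ← integral_indicator (hm₁ s hs), indicator_indicator, inter_comm]

theorem CondIndep.condExp_inter_inter_ae_eq_mul (h₀₁ : m₀ ≤ m₁) (hm₁ : m₁ ≤ mΩ) (hY : mY ≤ mΩ)
    (hT : mT ≤ mΩ) (h₀ : CondIndep m₀ mY m₁ (h₀₁.trans hm₁) μ) (h₁ : CondIndep m₁ mY mT hm₁ μ)
    {A s t : Set Ω} (hA : MeasurableSet[mY] A) (hs : MeasurableSet[m₁] s)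
    (ht : MeasurableSet[mT] t) :
    μ⟦A ∩ (s ∩ t) | m₀⟧ =ᵐ[μ] μ⟦A | m₀⟧ * μ⟦s ∩ t | m₀⟧ := by
  have hA₁ := h₀.condExp_indicator_ae_eq_of_le h₀₁ hm₁ hY hA
  have hAt := (condIndep_iff m₁ mY mT hm₁ hY hT μ).mp h₁ A t hA ht
  have hAst : μ⟦A ∩ (s ∩ t) | m₁⟧ =ᵐ[μ] s.indicator (μ⟦A ∩ t | m₁⟧) := by
    rw [inter_left_comm]
    exact condExp_inter_ae_eq_indicator hs ((hY A hA).inter (hT t ht))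
  have hst := condExp_inter_ae_eq_indicator (μ := μ) hs (hT t ht)
  have h_inner : μ⟦A ∩ (s ∩ t) | m₁⟧ =ᵐ[μ] μ⟦A | m₀⟧ * μ⟦s ∩ t | m₁⟧ := by
    filter_upwards [hA₁, hAt, hAst, hst] with ω hA₁ω hAtω hAstω hstω
    by_cases hω : ω ∈ s <;> simp_all
  calc μ⟦A ∩ (s ∩ t) | m₀⟧
      =ᵐ[μ] μ[μ⟦A ∩ (s ∩ t) | m₁⟧ | m₀] := (condExp_condExp_of_le h₀₁ hm₁).symm
    _ =ᵐ[μ] μ[μ⟦A | m₀⟧ * μ⟦s ∩ t | m₁⟧ | m₀] := condExp_congr_ae h_inner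
    _ =ᵐ[μ] μ⟦A | m₀⟧ * μ[μ⟦s ∩ t | m₁⟧ | m₀] :=
        condExp_condExp_indicator_mul (h₀₁.trans hm₁) A integrable_condExp
    _ =ᵐ[μ] μ⟦A | m₀⟧ * μ⟦s ∩ t | m₀⟧ :=
        Filter.EventuallyEq.rfl.mul (condExp_condExp_of_le h₀₁ hm₁)

theorem CondIndep.sup_right_of_condIndep (h₀₁ : m₀ ≤ m₁) (hm₁ : m₁ ≤ mΩ) (hY : mY ≤ mΩ)
    (hT : mT ≤ mΩ) (h₀ : CondIndep m₀ mY m₁ (h₀₁.trans hm₁) μ) (h₁ : CondIndep m₁ mY mT hm₁ μ) :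
    CondIndep m₀ mY (m₁ ⊔ mT) (h₀₁.trans hm₁) μ := by
  refine CondIndepSets.condIndep hY (sup_le hm₁ hT)
    (@MeasurableSpace.isPiSystem_measurableSet Ω mY)
    (IsPiSystem.image2_inter (@MeasurableSpace.isPiSystem_measurableSet Ω m₁)
      (@MeasurableSpace.isPiSystem_measurableSet Ω mT))
    (@MeasurableSpace.generateFrom_measurableSet Ω mY).symm
    (MeasurableSpace.generateFrom_image2_inter_measurableSet m₁ mT).symm ?_
  refine (condIndepSets_iff m₀ (h₀₁.trans hm₁) _ _ (fun A hA => hY A hA) ?_ μ).mpr ?_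
  · rintro _ ⟨s, hs, t, ht, rfl⟩
    exact (hm₁ s hs).inter (hT t ht)
  rintro A _ hA ⟨s, hs, t, ht, rfl⟩
  exact h₀.condExp_inter_inter_ae_eq_mul h₀₁ hm₁ hY hT h₁ hA hs ht

end ProbabilityTheory

open ProbabilityTheory

/-- If `Y(t) ⊥ T | V` (exchangeability given `V`) and `Y(t) ⊥ V | P_t(V)` where `P_t` is a
measurable function of `V`, then `Y(t) ⊥ (V, T) | P_t(V)`. -/
theorem prognostic_score_screens_off
    {Ω : Type*} {mΩ : MeasurableSpace Ω} [StandardBorelSpace Ω]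
    {μ : Measure Ω} [IsFiniteMeasure μ]
    {𝒱 β 𝒯 : Type*} [MeasurableSpace 𝒱] [MeasurableSpace β] [MeasurableSpace 𝒯]
    {n : ℕ}
    (Yt : Ω → β) (T : Ω → 𝒯) (V : Ω → 𝒱) (Pt : 𝒱 → (Fin n → ℝ))
    (hY : Measurable Yt) (hT : Measurable T) (hV : Measurable V) (hP : Measurable Pt)
    (hexch : CondIndepFun (MeasurableSpace.comap V inferInstance) hV.comap_le Yt T μ)
    (hpgs : CondIndepFun (MeasurableSpace.comap (fun ω => Pt (V ω)) inferInstance)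
      ((hP.comp hV).comap_le) Yt V μ) :
    CondIndepFun (MeasurableSpace.comap (fun ω => Pt (V ω)) inferInstance)
      ((hP.comp hV).comap_le) Yt (fun ω => (V ω, T ω)) μ := by
  have h_score_le : MeasurableSpace.comap (fun ω => Pt (V ω)) inferInstance
      ≤ MeasurableSpace.comap V inferInstance :=
    (hP.comp (comap_measurable V)).comap_le
  rw [condIndepFun_iff_condIndep] at hexch hpgs ⊢
  have h_pair : MeasurableSpace.comap (fun ω => (V ω, T ω)) inferInstance
      = MeasurableSpace.comap V inferInstance ⊔ MeasurableSpace.comap T inferInstance :=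
    MeasurableSpace.comap_prodMk V T
  rw [h_pair]
  exact hpgs.sup_right_of_condIndep h_score_le hV.comap_le hY.comap_le hT.comap_le hexch
end

section
/- Let b be a measurable function of a random variable V and let e(V) := P(T=1 | V) be the propensity score, where T is binary. Then T ⊥ V | b(V) if and only if e(V) is b(V)-measurable (i.e., e(V) = f(b(V)) for some measurable f). -/
open ProbabilityTheory MeasureTheory

/-!
Since `σ(b(V)) ≤ σ(V)`, an event `A` is conditionally independent of `V` given `b(V)` exactly
when `P(A | V) = P(A | b(V))` a.e., i.e. when `P(A | V)` is already `b(V)`-measurable: one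
direction is the tower property with the pull-out property, the other the uniqueness of
conditional expectations tested on the events of `σ(V)`. For binary `T` the conditional
probability of every `T`-event is affine in `P(T = 1 | ·)`, so only `A = {T = 1}` matters, and
the Doob–Dynkin lemma turns `b(V)`-measurability of `e(V)` into `e(V) = f(b(V))`.
-/

section

variable {Ω : Type*} {m m₁ m₂ mΩ : MeasurableSpace Ω} {μ : Measure Ω} [IsFiniteMeasure μ]

theorem condExp_indicator_condExp (f : Ω → ℝ) {B : Set Ω} (hB : MeasurableSet B) :
    μ[B.indicator (μ[f | m]) | m] =ᵐ[μ] μ[f | m] * μ⟦B | m⟧ := by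
  have hmul : B.indicator (μ[f | m]) = μ[f | m] * B.indicator fun _ => (1 : ℝ) := by
    ext ω; by_cases hω : ω ∈ B <;> simp [hω]
  rw [hmul]
  refine condExp_mul_of_stronglyMeasurable_left stronglyMeasurable_condExp ?_
    ((integrable_const 1).indicator hB)
  exact hmul ▸ integrable_condExp.indicator hB

theorem forall_condExp_inter_ae_eq_mul_iff (hm : m ≤ m₂) (hm₂ : m₂ ≤ mΩ) {A : Set Ω}
    (hA : MeasurableSet A) :
    (∀ B, MeasurableSet[m₂] B → μ⟦A ∩ B | m⟧ =ᵐ[μ] μ⟦A | m⟧ * μ⟦B | m⟧) ↔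
      μ⟦A | m₂⟧ =ᵐ[μ] μ⟦A | m⟧ := by
  have hind : ∀ B, (A ∩ B).indicator (fun _ => (1 : ℝ)) =
      B.indicator (A.indicator fun _ => 1) := fun B => by
    rw [Set.indicator_indicator, Set.inter_comm]
  constructor
  · intro h
    refine (ae_eq_condExp_of_forall_setIntegral_eq hm₂ ((integrable_const 1).indicator hA)
      (fun _ _ _ => integrable_condExp.integrableOn) (fun B hB _ => ?_)
      (stronglyMeasurable_condExp.mono hm).aestronglyMeasurable).symm
    have hBΩ := hm₂ B hB
    calc ∫ ω in B, (μ⟦A | m⟧) ω ∂μ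
        = ∫ ω, (μ[B.indicator (μ⟦A | m⟧) | m]) ω ∂μ := by
          rw [integral_condExp (hm.trans hm₂), integral_indicator hBΩ]
      _ = ∫ ω, (μ⟦A ∩ B | m⟧) ω ∂μ :=
          integral_congr_ae ((condExp_indicator_condExp _ hBΩ).trans (h B hB).symm)
      _ = ∫ ω in B, A.indicator (fun _ => (1 : ℝ)) ω ∂μ := by
          rw [integral_condExp (hm.trans hm₂), hind, integral_indicator hBΩ]
  · intro h B hB
    calc μ⟦A ∩ B | m⟧
        =ᵐ[μ] μ[μ⟦A ∩ B | m₂⟧ | m] := (condExp_condExp_of_le hm hm₂).symm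
      _ =ᵐ[μ] μ[B.indicator (μ⟦A | m⟧) | m] := by
          refine condExp_congr_ae ?_
          rw [hind]
          refine (condExp_indicator ((integrable_const 1).indicator hA) hB).trans ?_
          filter_upwards [h] with ω hω
          by_cases hωB : ω ∈ B <;> simp [hωB, hω]
      _ =ᵐ[μ] μ⟦A | m⟧ * μ⟦B | m⟧ := condExp_indicator_condExp _ (hm₂ B hB)

theorem condExp_ae_eq_condExp_iff_aestronglyMeasurable (hm : m ≤ m₂) (hm₂ : m₂ ≤ mΩ)
    (f : Ω → ℝ) : μ[f | m₂] =ᵐ[μ] μ[f | m] ↔ AEStronglyMeasurable[m] (μ[f | m₂]) μ := by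
  refine ⟨fun h => ⟨_, stronglyMeasurable_condExp, h⟩, fun h => ?_⟩
  calc μ[f | m₂] =ᵐ[μ] μ[μ[f | m₂] | m] :=
        (condExp_of_aestronglyMeasurable' (hm.trans hm₂) h integrable_condExp).symm
    _ =ᵐ[μ] μ[f | m] := condExp_condExp_of_le hm hm₂

theorem condExp_comp_fin_two (hm : m ≤ mΩ) {T : Ω → Fin 2} (hT : Measurable T) (h : Fin 2 → ℝ) :
    μ[h ∘ T | m] =ᵐ[μ] fun ω => h 0 + (h 1 - h 0) * (μ⟦T ⁻¹' {1} | m⟧) ω := by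
  set A := T ⁻¹' {1}
  have haffine : h ∘ T = (fun _ => h 0) + (h 1 - h 0) • A.indicator (fun _ => (1 : ℝ)) := by
    ext ω
    rcases Fin.exists_fin_two.mp ⟨T ω, rfl⟩ with hω | hω <;> simp [A, hω]
  have hAi : Integrable (A.indicator fun _ => (1 : ℝ)) μ :=
    (integrable_const 1).indicator (hT (measurableSet_singleton 1))
  rw [haffine]
  filter_upwards [condExp_add (integrable_const (h 0)) (hAi.smul (h 1 - h 0)) m,
    condExp_smul (h 1 - h 0) (A.indicator fun _ => (1 : ℝ)) m] with ω hadd hsmul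
  rw [hadd, Pi.add_apply, hsmul, condExp_const hm]
  rfl

theorem forall_condExp_ae_eq_iff_fin_two (hm : m ≤ mΩ) (hm₂ : m₂ ≤ mΩ) {T : Ω → Fin 2}
    (hT : Measurable T) :
    (∀ A, MeasurableSet[MeasurableSpace.comap T inferInstance] A →
        μ⟦A | m₂⟧ =ᵐ[μ] μ⟦A | m⟧) ↔ μ⟦T ⁻¹' {1} | m₂⟧ =ᵐ[μ] μ⟦T ⁻¹' {1} | m⟧ := by
  refine ⟨fun h => h _ ⟨{1}, measurableSet_singleton 1, rfl⟩, ?_⟩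
  rintro h _ ⟨s, -, rfl⟩
  change μ[s.indicator (fun _ => (1 : ℝ)) ∘ T | m₂] =ᵐ[μ] μ[s.indicator (fun _ => (1 : ℝ)) ∘ T | m]
  filter_upwards [condExp_comp_fin_two hm₂ hT (s.indicator fun _ => 1),
    condExp_comp_fin_two hm hT (s.indicator fun _ => 1), h] with ω h₂ h₁ hω
  rw [h₂, h₁, hω]

theorem condIndep_iff_forall_condExp_ae_eq [StandardBorelSpace Ω] (hm : m ≤ m₂)
    (hm₁ : m₁ ≤ mΩ) (hm₂ : m₂ ≤ mΩ) :
    CondIndep m m₁ m₂ (hm.trans hm₂) μ ↔ ∀ A, MeasurableSet[m₁] A → μ⟦A | m₂⟧ =ᵐ[μ] μ⟦A | m⟧ := by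
  rw [condIndep_iff _ _ _ _ hm₁ hm₂]
  exact forall_congr' fun A => forall_comm.trans
    (imp_congr_right fun hA => forall_condExp_inter_ae_eq_mul_iff hm hm₂ (hm₁ A hA))

end

section

variable {Ω γ Z : Type*} {mΩ : MeasurableSpace Ω} [MeasurableSpace γ] {μ : Measure Ω}
  [TopologicalSpace Z] [PolishSpace Z] [MeasurableSpace Z] [BorelSpace Z] [Nonempty Z]

theorem aestronglyMeasurable_comap_iff {φ : Ω → γ} {g : Ω → Z} :
    AEStronglyMeasurable[MeasurableSpace.comap φ inferInstance] g μ ↔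
      ∃ f : γ → Z, Measurable f ∧ g =ᵐ[μ] f ∘ φ := by
  constructor
  · rintro ⟨g', hg', hgg'⟩
    obtain ⟨f, hf, rfl⟩ := hg'.exists_eq_measurable_comp
    exact ⟨f, hf.measurable, hgg'⟩
  · rintro ⟨f, hf, hgf⟩
    exact ⟨f ∘ φ, (hf.comp (comap_measurable φ)).stronglyMeasurable, hgf⟩

end

/-- Characterization of balancing scores: for binary `T`, with `e(V) := P(T = 1 | V)` the
propensity score, `T ⊥ V | b(V)` holds iff `e(V)` is a measurable function of `b(V)`. -/
theorem balancing_score_iff_propensity_measurable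
    {Ω : Type*} {mΩ : MeasurableSpace Ω} [StandardBorelSpace Ω]
    {μ : Measure Ω} [IsProbabilityMeasure μ]
    {𝒱 γ : Type*} [MeasurableSpace 𝒱] [MeasurableSpace γ]
    (T : Ω → Fin 2) (V : Ω → 𝒱) (b : 𝒱 → γ)
    (hT : Measurable T) (hV : Measurable V) (hb : Measurable b) :
    CondIndepFun (MeasurableSpace.comap (fun ω => b (V ω)) inferInstance)
        ((hb.comp hV).comap_le) T V μ ↔
      ∃ f : γ → ℝ, Measurable f ∧
        (μ⟦T ⁻¹' {1} | MeasurableSpace.comap V inferInstance⟧)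
          =ᵐ[μ] fun ω => f (b (V ω)) := by
  have hbV : MeasurableSpace.comap (fun ω => b (V ω)) inferInstance
      ≤ MeasurableSpace.comap V inferInstance :=
    (hb.comp (comap_measurable V)).comap_le
  rw [condIndepFun_iff_condIndep, condIndep_iff_forall_condExp_ae_eq hbV hT.comap_le hV.comap_le,
    forall_condExp_ae_eq_iff_fin_two (hbV.trans hV.comap_le) hV.comap_le hT,
    condExp_ae_eq_condExp_iff_aestronglyMeasurable hbV hV.comap_le,
    aestronglyMeasurable_comap_iff]
  rfl
end

section
/- The propensity score e(V) = P(T=1 | V) is itself a balancing score: T ⊥ V | e(V). -/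
open ProbabilityTheory MeasureTheory

/-! Write `e = P(T = 1 | V)`. For `B ∈ σ(V)`, the tower property and pulling out the factors
`1_B` (measurable for `σ(V)`) and `e` (measurable for `σ(e)`) give
`P(T = 1, B | e) = e · P(B | e)`, and `P(T = 1 | e) = e` for the same reason. Since `σ(T)` is
generated by the single event `{T = 1}` and `σ(V)` is a π-system, this factorisation is
conditional independence. -/

section

variable {Ω : Type*} {m' mV mΩ : MeasurableSpace Ω} {μ : Measure Ω} [IsFiniteMeasure μ]
  {A B : Set Ω}

theorem condExp_inter_ae_eq_mul_of_stronglyMeasurable_condExp (hm' : m' ≤ mV) (hmV : mV ≤ mΩ)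
    (hA : MeasurableSet A) (hB : MeasurableSet[mV] B)
    (hAm' : StronglyMeasurable[m'] (μ⟦A | mV⟧)) :
    μ⟦A ∩ B | m'⟧ =ᵐ[μ] μ⟦A | m'⟧ * μ⟦B | m'⟧ := by
  set e := μ⟦A | mV⟧
  have hB' : MeasurableSet B := hmV B hB
  have hA_int : Integrable (A.indicator fun _ ↦ (1 : ℝ)) μ := (integrable_const 1).indicator hA
  have hB_int : Integrable (B.indicator fun _ ↦ (1 : ℝ)) μ := (integrable_const 1).indicator hB'
  have hA_cond : μ⟦A | m'⟧ =ᵐ[μ] e := by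
    refine (condExp_condExp_of_le hm' hmV).symm.trans ?_
    rw [condExp_of_stronglyMeasurable (hm'.trans hmV) hAm' integrable_condExp]
  have h_indicator : B.indicator e = e * B.indicator fun _ ↦ (1 : ℝ) := by
    ext ω
    simpa using Set.indicator_mul_right B e fun _ ↦ (1 : ℝ)
  calc μ⟦A ∩ B | m'⟧
      =ᵐ[μ] μ[μ⟦A ∩ B | mV⟧ | m'] := (condExp_condExp_of_le hm' hmV).symm
    _ =ᵐ[μ] μ[B.indicator e | m'] := by
        refine condExp_congr_ae ?_
        rw [Set.inter_comm, ← Set.indicator_indicator]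
        exact condExp_indicator hA_int hB
    _ =ᵐ[μ] e * μ⟦B | m'⟧ := by
        rw [h_indicator]
        exact condExp_mul_of_stronglyMeasurable_left hAm'
          (h_indicator ▸ integrable_condExp.indicator hB') hB_int
    _ =ᵐ[μ] μ⟦A | m'⟧ * μ⟦B | m'⟧ := hA_cond.symm.mul (ae_eq_refl _)

theorem condIndep_generateFrom_singleton_of_stronglyMeasurable_condExp [StandardBorelSpace Ω]
    (hm' : m' ≤ mV) (hmV : mV ≤ mΩ) (hA : MeasurableSet A)
    (hAm' : StronglyMeasurable[m'] (μ⟦A | mV⟧)) :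
    CondIndep m' (MeasurableSpace.generateFrom {A}) mV (hm'.trans hmV) μ := by
  refine CondIndepSets.condIndep (MeasurableSpace.generateFrom_le (by simpa using hA)) hmV
    (IsPiSystem.singleton A) (@MeasurableSpace.isPiSystem_measurableSet Ω mV) rfl
    (@MeasurableSpace.generateFrom_measurableSet Ω mV).symm ?_
  rw [condIndepSets_iff _ _ {A} {s | MeasurableSet[mV] s} (by simpa using hA)
    fun B hB ↦ hmV B hB]
  rintro _ B rfl hB
  exact condExp_inter_ae_eq_mul_of_stronglyMeasurable_condExp hm' hmV hA hB hAm'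

end

theorem MeasurableSpace.comap_fin_two_eq_generateFrom {Ω : Type*} (T : Ω → Fin 2) :
    MeasurableSpace.comap T inferInstance = MeasurableSpace.generateFrom {T ⁻¹' {1}} := by
  have h_top : (inferInstance : MeasurableSpace (Fin 2)) = generateFrom {{1}} := by
    refine le_antisymm (fun s _ ↦ ?_) (generateFrom_le fun _ _ ↦ trivial)
    have h_one : MeasurableSet[generateFrom {{1}}] {(1 : Fin 2)} := measurableSet_generateFrom rfl
    have h_zero : MeasurableSet[generateFrom {{1}}] {(0 : Fin 2)} := by
      convert h_one.compl
      ext i; fin_cases i <;> simp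
    rw [← Set.biUnion_of_singleton s]
    refine .biUnion s.to_countable fun i _ ↦ ?_
    fin_cases i
    exacts [h_zero, h_one]
  rw [h_top, comap_generateFrom, Set.image_singleton]

/-- The propensity score `e(V) = P(T = 1 | V)` is itself a balancing score: `T ⊥ V | e(V)`. -/
theorem propensity_is_balancing
    {Ω : Type*} {mΩ : MeasurableSpace Ω} [StandardBorelSpace Ω]
    {μ : Measure Ω} [IsProbabilityMeasure μ]
    {𝒱 : Type*} [MeasurableSpace 𝒱]
    (T : Ω → Fin 2) (V : Ω → 𝒱)
    (hT : Measurable T) (hV : Measurable V)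
    (hle : MeasurableSpace.comap
      (μ⟦T ⁻¹' {1} | MeasurableSpace.comap V inferInstance⟧) inferInstance ≤ mΩ) :
    CondIndepFun (MeasurableSpace.comap
      (μ⟦T ⁻¹' {1} | MeasurableSpace.comap V inferInstance⟧) inferInstance) hle T V μ := by
  rw [condIndepFun_iff_condIndep, MeasurableSpace.comap_fin_two_eq_generateFrom]
  exact condIndep_generateFrom_singleton_of_stronglyMeasurable_condExp
    stronglyMeasurable_condExp.measurable.comap_le hV.comap_le (hT (measurableSet_singleton 1))
    (Measurable.of_comap_le le_rfl).stronglyMeasurable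
end

section
/- Let q_0, q_1 be probability measures and L(·, t) measurable losses with |L(z,t)| ≤ M. Define ε_{F,t} := E_{q_t} L(·, t) and ε_{CF,t} := E_{q_{1−t}} L(·, t). For weights p_0, p_1 ≥ 0 with p_0 + p_1 = 1, one has p_0 ε_{CF,1} + p_1 ε_{CF,0} ≤ p_0 ε_{F,1} + p_1 ε_{F,0} + M (√(KL(q_0‖q_1)/2) + √(KL(q_1‖q_0)/2)). -/
/-!
Each risk gap `∫ L(·,t) dq₀ - ∫ L(·,t) dq₁` is at most `M · D`, where `D = ∫ |dq₀/dq₁ - 1| dq₁`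
is the `L¹` distance, which is symmetric under mutual absolute continuity. Pinsker's inequality
gives both `D² ≤ 2 KL(q₀‖q₁)` and `D² ≤ 2 KL(q₁‖q₀)`, so `D` is bounded by the average
`√(KL(q₀‖q₁)/2) + √(KL(q₁‖q₀)/2)` of the two bounds. Pinsker's inequality itself comes from
integrating the elementary bound `6 t |x - 1| ≤ 2 klFun x + 3 t² (x + 2)` at `x = dq₀/dq₁`, which
follows from `3 (x - 1)² ≤ (2x + 4) klFun x`, and optimising in `t`.
-/

open MeasureTheory Real InformationTheory Set

section Elementary

variable {x : ℝ}

lemma two_mul_sub_one_le_add_one_mul_log (hx : 1 ≤ x) : 2 * (x - 1) ≤ (x + 1) * log x := by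
  have h := le_log_one_add_of_nonneg (sub_nonneg.mpr hx)
  rw [add_sub_cancel, show x - 1 + 2 = x + 1 by ring, div_le_iff₀ (by linarith)] at h
  linarith

lemma add_one_mul_log_le_two_mul_sub_one (hx₀ : 0 < x) (hx₁ : x ≤ 1) :
    (x + 1) * log x ≤ 2 * (x - 1) := by
  have h := two_mul_sub_one_le_add_one_mul_log (one_le_inv₀ hx₀ |>.mpr hx₁)
  rw [log_inv] at h
  have h' := mul_le_mul_of_nonneg_left h hx₀.le
  field_simp at h'
  linarith

lemma hasDerivAt_mul_klFun_sub_sq (hx : x ≠ 0) :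
    HasDerivAt (fun y => (2 * y + 4) * klFun y - 3 * (y - 1) ^ 2)
      (4 * ((x + 1) * log x - 2 * (x - 1))) x := by
  have hlin : HasDerivAt (fun y : ℝ => 2 * y + 4) 2 x := by
    simpa using ((hasDerivAt_id x).const_mul 2).add_const 4
  have hsq : HasDerivAt (fun y : ℝ => 3 * (y - 1) ^ 2) (3 * (2 * (x - 1))) x := by
    simpa using (((hasDerivAt_id x).sub_const 1).pow 2).const_mul 3
  exact ((hlin.mul (hasDerivAt_klFun hx)).sub hsq).congr_deriv (by rw [klFun_apply]; ring)

/-- The difference of the two sides vanishes at `x = 1`, and its derivative has the sign of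
`x - 1`. -/
lemma three_mul_sq_sub_one_le_mul_klFun (hx : 0 ≤ x) :
    3 * (x - 1) ^ 2 ≤ (2 * x + 4) * klFun x := by
  set g : ℝ → ℝ := fun y => (2 * y + 4) * klFun y - 3 * (y - 1) ^ 2
  suffices g 1 ≤ g x by simpa [g, klFun_one] using this
  have hg : Continuous g := by fun_prop [continuous_klFun]
  set g' : ℝ → ℝ := fun y => 4 * ((y + 1) * log y - 2 * (y - 1))
  have hg' : ∀ y ∈ Ioi (0 : ℝ), HasDerivAt g (g' y) y :=
    fun y hy => hasDerivAt_mul_klFun_sub_sq (ne_of_gt hy)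
  rcases le_total x 1 with hx₁ | hx₁
  · refine antitoneOn_of_hasDerivWithinAt_nonpos (f' := g') (convex_Icc 0 1) hg.continuousOn
      (fun y hy => ?_) (fun y hy => ?_) ⟨hx, hx₁⟩ ⟨zero_le_one, le_rfl⟩ hx₁
    all_goals rw [interior_Icc] at hy
    · exact (hg' y hy.1).hasDerivWithinAt
    · nlinarith [add_one_mul_log_le_two_mul_sub_one hy.1 hy.2.le]
  · refine monotoneOn_of_hasDerivWithinAt_nonneg (f' := g') (convex_Ici 1) hg.continuousOn
      (fun y hy => ?_) (fun y hy => ?_) self_mem_Ici hx₁ hx₁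
    all_goals rw [interior_Ici] at hy
    · exact (hg' y (mem_Ioi.mpr (zero_lt_one.trans hy))).hasDerivWithinAt
    · nlinarith [two_mul_sub_one_le_add_one_mul_log hy.le]

lemma six_mul_mul_abs_sub_one_le (hx : 0 ≤ x) (t : ℝ) :
    6 * t * |x - 1| ≤ 2 * klFun x + 3 * t ^ 2 * (x + 2) := by
  have h := three_mul_sq_sub_one_le_mul_klFun hx
  have hsq : |x - 1| ^ 2 = (x - 1) ^ 2 := sq_abs _
  nlinarith [sq_nonneg (|x - 1| - t * (x + 2))]

end Elementary

section L1Dist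

variable {α : Type*} [MeasurableSpace α] {μ ν : Measure α}

/-- For `μ ≪ ν` this is twice the total variation distance. -/
noncomputable def l1Dist (μ ν : Measure α) : ℝ := ∫ x, |(μ.rnDeriv ν x).toReal - 1| ∂ν

lemma integrable_abs_toReal_rnDeriv_sub_one [IsFiniteMeasure μ] [IsFiniteMeasure ν] :
    Integrable (fun x => |(μ.rnDeriv ν x).toReal - 1|) ν :=
  (Measure.integrable_toReal_rnDeriv.sub (integrable_const 1)).abs

lemma l1Dist_comm [SigmaFinite μ] [SigmaFinite ν] (hμν : μ ≪ ν) (hνμ : ν ≪ μ) :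
    l1Dist ν μ = l1Dist μ ν := by
  rw [l1Dist, ← integral_toReal_rnDeriv_mul hμν]
  refine integral_congr_ae ?_
  have h_inv : ν.rnDeriv μ * μ.rnDeriv ν =ᵐ[ν] 1 :=
    (Measure.rnDeriv_mul_rnDeriv hνμ).trans (Measure.rnDeriv_self ν)
  filter_upwards [h_inv] with x hx
  have h_mul : (ν.rnDeriv μ x).toReal * (μ.rnDeriv ν x).toReal = 1 := by
    simpa [ENNReal.toReal_mul] using congrArg ENNReal.toReal hx
  calc (μ.rnDeriv ν x).toReal * |(ν.rnDeriv μ x).toReal - 1|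
      = |(μ.rnDeriv ν x).toReal * ((ν.rnDeriv μ x).toReal - 1)| := by
        rw [abs_mul, abs_of_nonneg ENNReal.toReal_nonneg]
    _ = |(μ.rnDeriv ν x).toReal - 1| := by rw [mul_sub, mul_comm, h_mul, mul_one, abs_sub_comm]

lemma integral_sub_integral_le_mul_l1Dist [IsFiniteMeasure μ] [IsFiniteMeasure ν] (hμν : μ ≪ ν)
    {h : α → ℝ} {M : ℝ} (hh : AEStronglyMeasurable h ν) (hM : ∀ x, |h x| ≤ M) :
    ∫ x, h x ∂μ - ∫ x, h x ∂ν ≤ M * l1Dist μ ν := by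
  have hM' : ∀ x, ‖h x‖ ≤ M := hM
  have hν : Integrable h ν := .of_bound hh M (ae_of_all _ hM')
  have hμ : Integrable h μ := .of_bound (hh.mono_ac hμν) M (ae_of_all _ hM')
  have hμν_int : Integrable (fun x => (μ.rnDeriv ν x).toReal * h x) ν :=
    (integrable_rnDeriv_smul_iff hμν).mpr hμ
  rw [← integral_toReal_rnDeriv_mul hμν, ← integral_sub hμν_int hν, l1Dist,
    ← integral_const_mul]
  refine integral_mono (hμν_int.sub hν) (integrable_abs_toReal_rnDeriv_sub_one.const_mul M)
    fun x => ?_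
  calc (μ.rnDeriv ν x).toReal * h x - h x = ((μ.rnDeriv ν x).toReal - 1) * h x := by ring
    _ ≤ |(μ.rnDeriv ν x).toReal - 1| * |h x| := by rw [← abs_mul]; exact le_abs_self _
    _ ≤ M * |(μ.rnDeriv ν x).toReal - 1| := by
      rw [mul_comm]; exact mul_le_mul_of_nonneg_right (hM x) (abs_nonneg _)

/-- **Pinsker's inequality**. -/
theorem sq_l1Dist_le_two_mul_integral_llr [IsProbabilityMeasure μ] [IsProbabilityMeasure ν]
    (hμν : μ ≪ ν) (h_int : Integrable (llr μ ν) μ) :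
    l1Dist μ ν ^ 2 ≤ 2 * ∫ x, llr μ ν x ∂μ := by
  set f : α → ℝ := fun x => (μ.rnDeriv ν x).toReal
  set D := l1Dist μ ν
  have hf_int : Integrable f ν := Measure.integrable_toReal_rnDeriv
  have hf_add_int : Integrable (fun x => f x + 2) ν := hf_int.add (integrable_const 2)
  have hf_one : ∫ x, f x ∂ν = 1 := by simp [f, Measure.integral_toReal_rnDeriv hμν]
  have hkl_int : Integrable (fun x => klFun (f x)) ν := (integrable_klFun_rnDeriv_iff hμν).mpr h_int
  have hkl : ∫ x, klFun (f x) ∂ν = ∫ x, llr μ ν x ∂μ := by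
    simp [f, integral_klFun_rnDeriv hμν h_int]
  -- `six_mul_mul_abs_sub_one_le` integrated at `t = D / 3`, the optimal value of `t`
  have key : 6 * (D / 3) * D ≤ 2 * ∫ x, llr μ ν x ∂μ + 3 * (D / 3) ^ 2 * 3 :=
    calc 6 * (D / 3) * D = ∫ x, 6 * (D / 3) * |f x - 1| ∂ν := by
          rw [integral_const_mul]; rfl
      _ ≤ ∫ x, (2 * klFun (f x) + 3 * (D / 3) ^ 2 * (f x + 2)) ∂ν :=
          integral_mono (integrable_abs_toReal_rnDeriv_sub_one.const_mul _)
            ((hkl_int.const_mul 2).add (hf_add_int.const_mul _))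
            fun x => six_mul_mul_abs_sub_one_le ENNReal.toReal_nonneg _
      _ = 2 * ∫ x, llr μ ν x ∂μ + 3 * (D / 3) ^ 2 * 3 := by
          rw [integral_add (hkl_int.const_mul 2) (hf_add_int.const_mul _),
            integral_const_mul, integral_const_mul, integral_add hf_int (integrable_const 2),
            hf_one, hkl, integral_const]
          norm_num
  nlinarith [key]

end L1Dist

lemma le_sqrt_half_add_sqrt_half {d a b : ℝ} (ha : d ^ 2 ≤ 2 * a) (hb : d ^ 2 ≤ 2 * b) :
    d ≤ √(a / 2) + √(b / 2) := by
  have ha' : d / 2 ≤ √(a / 2) := Real.le_sqrt_of_sq_le (by linarith)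
  have hb' : d / 2 ≤ √(b / 2) := Real.le_sqrt_of_sq_le (by linarith)
  linarith

/-- Counterfactual risk bound: with `ε_{F,t} = E_{q_t} L(·,t)`, `ε_{CF,t} = E_{q_{1−t}} L(·,t)`,
`|L| ≤ M`, and weights `p₀ + p₁ = 1`, `p_t ≥ 0`,
`p₀ ε_{CF,1} + p₁ ε_{CF,0} ≤ p₀ ε_{F,1} + p₁ ε_{F,0} + M (√(KL(q₀‖q₁)/2) + √(KL(q₁‖q₀)/2))`,
where `KL(q‖q') = ∫ log (dq/dq') dq`. -/
theorem counterfactual_risk_bound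
    {Z : Type*} [MeasurableSpace Z]
    (q₀ q₁ : Measure Z) [IsProbabilityMeasure q₀] [IsProbabilityMeasure q₁]
    (L : Z → Fin 2 → ℝ) (M p₀ p₁ : ℝ)
    (hLm : ∀ t, Measurable (fun z => L z t))
    (hM : ∀ z t, |L z t| ≤ M)
    (hp₀ : 0 ≤ p₀) (hp₁ : 0 ≤ p₁) (hsum : p₀ + p₁ = 1)
    (hac₀ : q₀ ≪ q₁) (hac₁ : q₁ ≪ q₀)
    (hKL₀ : Integrable (fun z => Real.log (q₀.rnDeriv q₁ z).toReal) q₀)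
    (hKL₁ : Integrable (fun z => Real.log (q₁.rnDeriv q₀ z).toReal) q₁) :
    p₀ * (∫ z, L z 1 ∂q₀) + p₁ * (∫ z, L z 0 ∂q₁) ≤
      p₀ * (∫ z, L z 1 ∂q₁) + p₁ * (∫ z, L z 0 ∂q₀) +
        M * (Real.sqrt ((∫ z, Real.log (q₀.rnDeriv q₁ z).toReal ∂q₀) / 2) +
          Real.sqrt ((∫ z, Real.log (q₁.rnDeriv q₀ z).toReal ∂q₁) / 2)) := by
  have hM₀ : 0 ≤ M := (abs_nonneg _).trans (hM (nonempty_of_isProbabilityMeasure q₀).some 0)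
  have hcomm := l1Dist_comm hac₀ hac₁
  have h₁ : ∫ z, L z 1 ∂q₀ - ∫ z, L z 1 ∂q₁ ≤ M * l1Dist q₀ q₁ :=
    integral_sub_integral_le_mul_l1Dist hac₀ (hLm 1).aestronglyMeasurable (hM · 1)
  have h₀ : ∫ z, L z 0 ∂q₁ - ∫ z, L z 0 ∂q₀ ≤ M * l1Dist q₀ q₁ :=
    hcomm ▸ integral_sub_integral_le_mul_l1Dist hac₁ (hLm 0).aestronglyMeasurable (hM · 0)
  have hD : l1Dist q₀ q₁ ≤ √((∫ z, log (q₀.rnDeriv q₁ z).toReal ∂q₀) / 2) +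
      √((∫ z, log (q₁.rnDeriv q₀ z).toReal ∂q₁) / 2) :=
    le_sqrt_half_add_sqrt_half (sq_l1Dist_le_two_mul_integral_llr hac₀ hKL₀)
      (hcomm ▸ sq_l1Dist_le_two_mul_integral_llr hac₁ hKL₁)
  linear_combination mul_le_mul_of_nonneg_left h₁ hp₀ + mul_le_mul_of_nonneg_left h₀ hp₁ +
    mul_le_mul_of_nonneg_left hD hM₀ + M * l1Dist q₀ q₁ * hsum
end

section
/- Let L_0, L_1, L_0', L_1' be invertible 2n × 2n matrices and β_0, β_1, β_0', β_1' vectors in ℝ^{2n}. Define A_t = L_t^{-T} L_t'^{T} and c_t = L_t^{-T} (β_t − β_t'). If L_0^{-1} L_1 = L_0'^{-1} L_1' = C and β_0 − C^{-T} β_1 = β_0' − C^{-T} β_1', then A_0 = A_1 and c_0 = c_1. -/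
open Matrix

/-- Linear-algebraic core of identification via recovery of PtS ("spontaneous balance"):
with `A_t = L_t⁻ᵀ L_t'ᵀ` and `c_t = L_t⁻ᵀ (β_t − β_t')`, the conditions
`L₀⁻¹ L₁ = L₀'⁻¹ L₁' = C` and `β₀ − C⁻ᵀ β₁ = β₀' − C⁻ᵀ β₁'` force `A₀ = A₁` and `c₀ = c₁`. -/
theorem spontaneous_balance_forces_equal_transformations
    {n : ℕ} (L₀ L₁ L₀' L₁' C : Matrix (Fin (2 * n)) (Fin (2 * n)) ℝ)
    (β₀ β₁ β₀' β₁' : Fin (2 * n) → ℝ)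
    (hL₀ : IsUnit L₀.det) (hL₁ : IsUnit L₁.det)
    (hL₀' : IsUnit L₀'.det) (hL₁' : IsUnit L₁'.det)
    (hC : L₀⁻¹ * L₁ = C) (hC' : L₀'⁻¹ * L₁' = C)
    (hβ : β₀ - (Cᵀ)⁻¹.mulVec β₁ = β₀' - (Cᵀ)⁻¹.mulVec β₁') :
    (L₀ᵀ)⁻¹ * L₀'ᵀ = (L₁ᵀ)⁻¹ * L₁'ᵀ ∧
      (L₀ᵀ)⁻¹.mulVec (β₀ - β₀') = (L₁ᵀ)⁻¹.mulVec (β₁ - β₁') := by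
  have h1 : L₁ = L₀ * C := by
    rw [← hC, ← Matrix.mul_assoc, Matrix.mul_nonsing_inv _ hL₀, Matrix.one_mul]
  have h1' : L₁' = L₀' * C := by
    rw [← hC', ← Matrix.mul_assoc, Matrix.mul_nonsing_inv _ hL₀', Matrix.one_mul]
  have hCdet : IsUnit C.det := by
    have := hL₁
    rw [h1, Matrix.det_mul] at this
    exact isUnit_of_mul_isUnit_right this
  have hCT : IsUnit Cᵀ.det := by rwa [Matrix.det_transpose]
  have hL₁T : (L₁ᵀ)⁻¹ = (L₀ᵀ)⁻¹ * (Cᵀ)⁻¹ := by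
    rw [h1, Matrix.transpose_mul, Matrix.mul_inv_rev]
  have hvec : β₀ - β₀' = (Cᵀ)⁻¹.mulVec (β₁ - β₁') := by
    have := hβ
    funext i
    have h := congrFun this i
    simp only [Pi.sub_apply, Matrix.mulVec_sub] at *
    linarith
  constructor
  · rw [hL₁T, h1', Matrix.transpose_mul, Matrix.mul_assoc, ← Matrix.mul_assoc (Cᵀ)⁻¹,
      Matrix.nonsing_inv_mul _ hCT, Matrix.one_mul]
  · rw [hvec, hL₁T, ← Matrix.mulVec_mulVec]
end

section
/- Let X be a real-valued random variable with support equal to all of ℝ and density positive everywhere, let ε be a random variable independent of X with |ε| ≤ B a.s., and define T = 1{X + ε > 0} and the score s(X) = |X|. Then for every r > B, both P(T=1 | |X|=r) > 0 and P(T=0 | |X|=r) > 0, while X itself is not overlapping: for x > B, P(T=0 | X=x) = 0. -/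
open MeasureTheory ProbabilityTheory

/-- The prognostic score `|X|` can be overlapping even when the covariate `X` is not:
if `X` has an everywhere-positive density, `ε` is independent of `X` with `|ε| ≤ B` a.s., and
`T = 1{X + ε > 0}`, then a.e. on `{|X| > B}` the propensity `P(T = 1 | |X|)` lies strictly
between `0` and `1`, while a.e. on `{X > B}` we have `P(T = 0 | X) = 0`. -/
theorem prognostic_score_overlaps_but_covariate_does_not
    {Ω : Type*} {mΩ : MeasurableSpace Ω} {μ : Measure Ω} [IsProbabilityMeasure μ]
    (X ε : Ω → ℝ) (B : ℝ) (d : ℝ → ℝ) (T : Ω → ℝ)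
    (hX : Measurable X) (hε : Measurable ε)
    (hindep : IndepFun X ε μ)
    (hεB : ∀ᵐ ω ∂μ, |ε ω| ≤ B)
    (hd : Measurable d) (hdpos : ∀ x, 0 < d x)
    (hdens : μ.map X = MeasureTheory.volume.withDensity (fun x => ENNReal.ofReal (d x)))
    (hT : ∀ ω, T ω = if 0 < X ω + ε ω then 1 else 0) :
    (∀ᵐ ω ∂μ, B < |X ω| →
      0 < (μ[T | MeasurableSpace.comap (fun ω => |X ω|) inferInstance]) ω ∧
        (μ[T | MeasurableSpace.comap (fun ω => |X ω|) inferInstance]) ω < 1) ∧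
    (∀ᵐ ω ∂μ, B < X ω →
      (μ[(fun ω => 1 - T ω) | MeasurableSpace.comap X inferInstance]) ω = 0) := by
  have hXa : Measurable fun ω => |X ω| := hX.abs
  have hm₁ : MeasurableSpace.comap (fun ω => |X ω|) inferInstance ≤ mΩ := hXa.comap_le
  have hm₂ : MeasurableSpace.comap X inferInstance ≤ mΩ := hX.comap_le
  -- the event `{X + ε > 0}`
  set E : Set Ω := {ω | 0 < X ω + ε ω} with hEdef
  have hEmeas : MeasurableSet E := measurableSet_lt measurable_const (hX.add hε)
  have hTind : T = E.indicator fun _ => (1 : ℝ) := by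
    funext ω
    rw [hT ω, Set.indicator_apply]
    by_cases h : 0 < X ω + ε ω <;> simp [hEdef, h]
  have hTint : Integrable T μ := by
    rw [hTind]; exact (integrable_const (1 : ℝ)).indicator hEmeas
  have hT01 : ∀ ω, 0 ≤ T ω ∧ T ω ≤ 1 := by
    intro ω; rw [hT ω]; by_cases h : 0 < X ω + ε ω <;> simp [h]
  have hB0 : 0 ≤ B := by
    obtain ⟨ω, hω⟩ := hεB.exists
    exact le_trans (abs_nonneg _) hω
  -- generic positivity lemma for `X`-preimages
  have hμmap : ∀ D : Set ℝ, MeasurableSet D →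
      μ (X ⁻¹' D) = ∫⁻ x in D, ENNReal.ofReal (d x) ∂volume := by
    intro D hD
    rw [← Measure.map_apply hX hD, hdens, withDensity_apply _ hD]
  have hposiff : ∀ D : Set ℝ, MeasurableSet D → (0 < μ (X ⁻¹' D) ↔ 0 < volume D) := by
    intro D hD
    rw [hμmap D hD, lintegral_pos_iff_support hd.ennreal_ofReal]
    have hsupp : Function.support (fun x => ENNReal.ofReal (d x)) = Set.univ :=
      Set.eq_univ_of_forall fun x =>
        Function.mem_support.mpr (ENNReal.ofReal_pos.mpr (hdpos x)).ne'
    rw [hsupp, Measure.restrict_apply_univ]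
  -- the null set where `|ε| ≤ B` fails
  have hN : μ {ω | ¬ |ε ω| ≤ B} = 0 := ae_iff.mp hεB
  -- key lemma: any `m₁`-measurable set inside `{|X| > B}` of positive measure meets
  -- both `E` and `Eᶜ` in positive measure
  have key : ∀ A : Set Ω,
      MeasurableSet[MeasurableSpace.comap (fun ω => |X ω|) inferInstance] A →
      A ⊆ (fun ω => |X ω|) ⁻¹' Set.Ioi B → μ A ≠ 0 →
      0 < μ (A ∩ E) ∧ 0 < μ (A \ E) := by
    intro A hAm hAsub hApos
    obtain ⟨C, hC, hpre⟩ := MeasurableSpace.measurableSet_comap.mp hAm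
    set C' : Set ℝ := C ∩ Set.Ioi B with hC'def
    have hC'meas : MeasurableSet C' := hC.inter measurableSet_Ioi
    have hpre' : (fun ω => |X ω|) ⁻¹' C' = A := by
      rw [hC'def, Set.preimage_inter, hpre]
      exact Set.inter_eq_left.mpr hAsub
    have hC'pos : ∀ x ∈ C', B < x := fun x hx => hx.2
    have hsplit : (fun ω => |X ω|) ⁻¹' C' = X ⁻¹' C' ∪ X ⁻¹' (-C') := by
      ext ω
      simp only [Set.mem_preimage, Set.mem_union, Set.mem_neg]
      constructor
      · intro h
        rcases le_or_gt 0 (X ω) with h0 | h0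
        · left; rwa [abs_of_nonneg h0] at h
        · right; rwa [abs_of_neg h0] at h
      · rintro (h | h)
        · have : 0 < X ω := lt_of_le_of_lt hB0 (hC'pos _ h)
          rwa [abs_of_pos this]
        · have : X ω < 0 := by
            have := hC'pos _ h; linarith
          rwa [abs_of_neg this]
    -- positivity of `volume C'`
    have hvolC' : 0 < volume C' := by
      by_contra hv
      rw [not_lt, nonpos_iff_eq_zero] at hv
      have hv' : volume (-C') = 0 := by rw [Measure.measure_neg]; exact hv
      have h1 : μ (X ⁻¹' C') = 0 := by
        rw [hμmap C' hC'meas]; exact setLIntegral_measure_zero _ _ hv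
      have h2 : μ (X ⁻¹' (-C')) = 0 := by
        rw [hμmap _ hC'meas.neg]; exact setLIntegral_measure_zero _ _ hv'
      have : μ A = 0 := by
        rw [← hpre', hsplit]
        exact le_antisymm ((measure_union_le _ _).trans (by rw [h1, h2]; simp))
          (zero_le)
      exact hApos this
    have hP : 0 < μ (X ⁻¹' C') := (hposiff C' hC'meas).mpr hvolC'
    have hQ : 0 < μ (X ⁻¹' (-C')) := by
      refine (hposiff _ hC'meas.neg).mpr ?_
      rwa [Measure.measure_neg]
    have hsubA1 : X ⁻¹' C' ⊆ A := by
      rw [← hpre', hsplit]; exact Set.subset_union_left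
    have hsubA2 : X ⁻¹' (-C') ⊆ A := by
      rw [← hpre', hsplit]; exact Set.subset_union_right
    constructor
    · -- `X ∈ C'` forces `T = 1` off the null set
      have hnull : X ⁻¹' C' \ E ⊆ {ω | ¬ |ε ω| ≤ B} := by
        intro ω hω
        simp only [Set.mem_diff, Set.mem_preimage, hEdef, Set.mem_setOf_eq] at hω ⊢
        intro hb
        refine hω.2 ?_
        have h1 : B < X ω := hC'pos _ hω.1
        have h2 : -B ≤ ε ω := neg_le_of_abs_le hb
        linarith
      have hd0 : μ (X ⁻¹' C' \ E) = 0 := measure_mono_null hnull hN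
      have : μ (X ⁻¹' C') ≤ μ (X ⁻¹' C' ∩ E) := by
        calc μ (X ⁻¹' C') ≤ μ (X ⁻¹' C' ∩ E) + μ (X ⁻¹' C' \ E) :=
              measure_le_inter_add_diff μ _ _
          _ = μ (X ⁻¹' C' ∩ E) := by rw [hd0, add_zero]
      exact lt_of_lt_of_le (lt_of_lt_of_le hP this)
        (measure_mono (Set.inter_subset_inter_left _ hsubA1))
    · -- `X ∈ -C'` forces `T = 0` off the null set
      have hnull : X ⁻¹' (-C') ∩ E ⊆ {ω | ¬ |ε ω| ≤ B} := by
        intro ω hω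
        simp only [Set.mem_inter_iff, Set.mem_preimage, Set.mem_neg, hEdef,
          Set.mem_setOf_eq] at hω ⊢
        intro hb
        have h1 : B < -X ω := hC'pos _ hω.1
        have h2 : ε ω ≤ B := le_of_abs_le hb
        have := hω.2
        linarith
      have hd0 : μ (X ⁻¹' (-C') ∩ E) = 0 := measure_mono_null hnull hN
      have : μ (X ⁻¹' (-C')) ≤ μ (X ⁻¹' (-C') \ E) := by
        calc μ (X ⁻¹' (-C')) ≤ μ (X ⁻¹' (-C') ∩ E) + μ (X ⁻¹' (-C') \ E) :=
              measure_le_inter_add_diff μ _ _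
          _ = μ (X ⁻¹' (-C') \ E) := by rw [hd0, zero_add]
      exact lt_of_lt_of_le (lt_of_lt_of_le hQ this)
        (measure_mono (Set.diff_subset_diff_left hsubA2))
  -- set integral of `T`
  have hTsetInt : ∀ A : Set Ω, MeasurableSet A →
      ∫ ω in A, T ω ∂μ = (μ (A ∩ E)).toReal := by
    intro A hA
    rw [hTind, setIntegral_indicator hEmeas, setIntegral_const, smul_eq_mul, mul_one]
    rfl
  constructor
  · -- first part
    set g := μ[T | MeasurableSpace.comap (fun ω => |X ω|) inferInstance] with hgdef
    have hgm : Measurable[MeasurableSpace.comap (fun ω => |X ω|) inferInstance] g :=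
      stronglyMeasurable_condExp.measurable
    have hconstm : ∀ c : ℝ,
        Measurable[MeasurableSpace.comap (fun ω => |X ω|) inferInstance]
          fun _ : Ω => c := fun _ => measurable_const
    set S : Set Ω := (fun ω => |X ω|) ⁻¹' Set.Ioi B with hSdef
    have hSm₁ : MeasurableSet[MeasurableSpace.comap (fun ω => |X ω|) inferInstance] S :=
      MeasurableSpace.measurableSet_comap.mpr ⟨Set.Ioi B, measurableSet_Ioi, rfl⟩
    set A₁ : Set Ω := S ∩ {ω | g ω ≤ 0} with hA₁def
    set A₂ : Set Ω := S ∩ {ω | 1 ≤ g ω} with hA₂def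
    have hA₁m : MeasurableSet[MeasurableSpace.comap (fun ω => |X ω|) inferInstance] A₁ :=
      hSm₁.inter (measurableSet_le hgm (hconstm 0))
    have hA₂m : MeasurableSet[MeasurableSpace.comap (fun ω => |X ω|) inferInstance] A₂ :=
      hSm₁.inter (measurableSet_le (hconstm 1) hgm)
    have hA₁sub : A₁ ⊆ S := Set.inter_subset_left
    have hA₂sub : A₂ ⊆ S := Set.inter_subset_left
    have hμA₁ : μ A₁ = 0 := by
      by_contra hne
      obtain ⟨hpos, -⟩ := key A₁ hA₁m hA₁sub hne
      have heq : ∫ ω in A₁, T ω ∂μ = ∫ ω in A₁, g ω ∂μ :=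
        (setIntegral_condExp hm₁ hTint hA₁m).symm
      have hle : ∫ ω in A₁, g ω ∂μ ≤ 0 :=
        setIntegral_nonpos (hm₁ _ hA₁m) fun ω hω => hω.2
      rw [hTsetInt A₁ (hm₁ _ hA₁m)] at heq
      have htr : 0 < (μ (A₁ ∩ E)).toReal :=
        ENNReal.toReal_pos hpos.ne' (measure_ne_top μ _)
      linarith [heq ▸ hle]
    have hμA₂ : μ A₂ = 0 := by
      by_contra hne
      obtain ⟨-, hpos⟩ := key A₂ hA₂m hA₂sub hne
      have heq : ∫ ω in A₂, T ω ∂μ = ∫ ω in A₂, g ω ∂μ :=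
        (setIntegral_condExp hm₁ hTint hA₂m).symm
      have hge : 1 * (μ A₂).toReal ≤ ∫ ω in A₂, g ω ∂μ :=
        setIntegral_ge_of_const_le_real (hm₁ _ hA₂m) (measure_ne_top μ _)
          (fun ω hω => hω.2) integrable_condExp.integrableOn
      rw [hTsetInt A₂ (hm₁ _ hA₂m)] at heq
      have hlt : μ (A₂ ∩ E) < μ A₂ := by
        conv_rhs => rw [← measure_inter_add_diff A₂ hEmeas]
        exact ENNReal.lt_add_right (measure_ne_top μ _) hpos.ne'
      have hlt' : (μ (A₂ ∩ E)).toReal < (μ A₂).toReal :=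
        (ENNReal.toReal_lt_toReal (measure_ne_top μ _) (measure_ne_top μ _)).mpr hlt
      rw [one_mul] at hge
      linarith [heq ▸ hge]
    rw [ae_iff]
    refine measure_mono_null ?_ (measure_union_null hμA₁ hμA₂)
    intro ω hω
    simp only [Set.mem_setOf_eq, not_forall] at hω
    obtain ⟨hb, hng⟩ := hω
    have hωS : ω ∈ S := by simpa [hSdef] using hb
    rcases not_and_or.mp hng with h | h
    · exact Or.inl ⟨hωS, not_lt.mp h⟩
    · exact Or.inr ⟨hωS, not_lt.mp h⟩
  · -- second part
    set f : Ω → ℝ := fun ω => 1 - T ω with hfdef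
    have hfint : Integrable f μ := (integrable_const (1 : ℝ)).sub hTint
    set h := μ[f | MeasurableSpace.comap X inferInstance] with hhdef
    have hfnn : 0 ≤ᵐ[μ] f :=
      Filter.Eventually.of_forall fun ω => by
        simp only [hfdef, Pi.zero_apply, sub_nonneg]; exact (hT01 ω).2
    have hnn : 0 ≤ᵐ[μ] h := condExp_nonneg hfnn
    set S₂ : Set Ω := X ⁻¹' Set.Ioi B with hS₂def
    have hS₂m : MeasurableSet[MeasurableSpace.comap X inferInstance] S₂ :=
      MeasurableSpace.measurableSet_comap.mpr ⟨Set.Ioi B, measurableSet_Ioi, rfl⟩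
    have hS₂meas : MeasurableSet S₂ := hX measurableSet_Ioi
    have hf0 : ∀ᵐ ω ∂μ.restrict S₂, f ω = 0 := by
      rw [ae_restrict_iff' hS₂meas]
      filter_upwards [hεB] with ω hb hmem
      have hBX : B < X ω := hmem
      have hlt : 0 < X ω + ε ω := by
        have := neg_le_of_abs_le hb; linarith
      simp [hfdef, hT ω, hlt]
    have hint0 : ∫ ω in S₂, h ω ∂μ = 0 := by
      rw [setIntegral_condExp hm₂ hfint hS₂m]
      exact integral_eq_zero_of_ae hf0
    have hzero : h =ᵐ[μ.restrict S₂] 0 :=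
      (setIntegral_eq_zero_iff_of_nonneg_ae (ae_restrict_of_ae hnn)
        integrable_condExp.integrableOn).mp hint0
    have hae := (ae_restrict_iff' hS₂meas).mp hzero
    filter_upwards [hae] with ω hω hb
    exact hω hb
end
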